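/- arXiv:1605.01039 — 3 statements merged into one kernel-verified Lean document; each statement's English description precedes it below -/
import Mathlib

section
/- Let Ψ = Ψ_v be the square root embedding of a positively edge-weighted tree T into ℝ^{m-1}. For nodes v_1, v_2, v_3, v_4 of T such that the common subpath P = P_{v_1,v_2} ∩ P_{v_3,v_4} is traversed in the same direction by both oriented paths, the dot product (Ψ(v_2) - Ψ(v_1)) · (Ψ(v_4) - Ψ(v_3)) equals Σ_{e ∈ P} w(e). -/
open SimpleGraph

/-- The unique path between two vertices of a tree, as a walk. -/
noncomputable def treePath {V : Type*} (G : SimpleGraph V) (hG : G.IsTree) (a b : V) :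
    G.Walk a b :=
  (hG.existsUnique_path a b).choose

/-- The square root embedding with base node `v`: the coordinate of `Ψ_v u` at edge `e`
is `√(w e)` if `e` lies on the path from `v` to `u`, and `0` otherwise. -/
noncomputable def sqrtEmbed {V : Type*} [DecidableEq V] (G : SimpleGraph V) (hG : G.IsTree)
    [Fintype G.edgeSet] (w : Sym2 V → ℝ) (v u : V) : EuclideanSpace ℝ G.edgeSet :=
  WithLp.toLp 2 (fun e => if (e : Sym2 V) ∈ (treePath G hG v u).edges then Real.sqrt (w e) else 0)

/-- The tree metric: sum of the weights of the edges on the unique path. -/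
noncomputable def treeDist {V : Type*} (G : SimpleGraph V) (hG : G.IsTree)
    (w : Sym2 V → ℝ) (a b : V) : ℝ :=
  ((treePath G hG a b).edges.map w).sum

/-!
Deleting an edge `e` splits a tree into two sides, and `e` lies on the path from `a` to `b`
exactly when `a` and `b` lie on different sides. So the `e`-coordinate of `Ψ b - Ψ a` vanishes
unless `e` is on `P_{a,b}`; if `P_{a,b}` crosses `e` from `x` to `y`, it is `√(w e)` when the base
node is on the side of `x` and `-√(w e)` otherwise. Two paths crossing `e` in the same direction
thus carry the same sign at `e`, and the coordinate product is `w e`.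
-/

namespace SimpleGraph

variable {V : Type*} {G : SimpleGraph V}

theorem Walk.IsTrail.reachable_deleteEdges_fst_of_mem_darts {u v : V} {p : G.Walk u v}
    (hp : p.IsTrail) {d : G.Dart} (hd : d ∈ p.darts) :
    (G.deleteEdges {d.edge}).Reachable u d.fst := by
  induction p with
  | nil => simp at hd
  | @cons x y z hxy q ih =>
    rw [Walk.isTrail_cons] at hp
    rcases List.mem_cons.1 (Walk.darts_cons hxy q ▸ hd) with rfl | hdq
    · rfl
    · have hne : s(x, y) ≠ d.edge := fun h => hp.2 (h ▸ List.mem_map_of_mem hdq)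
      exact (Adj.reachable ((deleteEdges_adj ..).2 ⟨hxy, hne⟩)).trans (ih hp.1 hdq)

theorem Walk.IsTrail.reachable_deleteEdges_snd_of_mem_darts {u v : V} {p : G.Walk u v}
    (hp : p.IsTrail) {d : G.Dart} (hd : d ∈ p.darts) :
    (G.deleteEdges {d.edge}).Reachable d.snd v := by
  simpa using (hp.reverse.reachable_deleteEdges_fst_of_mem_darts
    (Walk.mem_darts_reverse.2 (by simpa using hd) : d.symm ∈ p.reverse.darts)).symm

theorem IsAcyclic.mem_edges_iff_not_reachable_deleteEdges (hG : G.IsAcyclic) {u v : V}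
    {p : G.Walk u v} (hp : p.IsPath) {e : Sym2 V} :
    e ∈ p.edges ↔ ¬(G.deleteEdges {e}).Reachable u v := by
  refine ⟨fun he hr => ?_, p.mem_edges_of_not_reachable_deleteEdges⟩
  obtain ⟨q, hq⟩ := hr.exists_isPath
  have hpq : p = q.mapLe (deleteEdges_le _) := congrArg Subtype.val <|
    (hG.subsingleton_path u v).elim ⟨p, hp⟩ ⟨_, hq.mapLe (deleteEdges_le _)⟩
  rw [hpq, Walk.edges_mapLe_eq_edges] at he
  simpa using q.edges_subset_edgeSet he

theorem IsAcyclic.not_reachable_deleteEdges_edge (hG : G.IsAcyclic) (d : G.Dart) :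
    ¬(G.deleteEdges {d.edge}).Reachable d.fst d.snd :=
  isBridge_iff.1 (isAcyclic_iff_forall_isBridge.1 hG d.edge_mem)

theorem Preconnected.reachable_deleteEdges_fst_or_snd (hG : G.Preconnected) (d : G.Dart)
    (x : V) : (G.deleteEdges {d.edge}).Reachable x d.fst ∨
      (G.deleteEdges {d.edge}).Reachable x d.snd := by
  by_contra! h
  obtain ⟨p, hp⟩ := hG.exists_isPath x d.fst
  obtain ⟨d', hd', hdd'⟩ := List.mem_map.1 (p.mem_edges_of_not_reachable_deleteEdges h.1)
  have hx := hdd' ▸ hp.isTrail.reachable_deleteEdges_fst_of_mem_darts hd'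
  rcases (dart_edge_eq_iff d' d).1 hdd' with rfl | rfl
  · exact h.1 hx
  · exact h.2 hx

end SimpleGraph

section TreePath

variable {V : Type*} {G : SimpleGraph V} (hG : G.IsTree)

theorem treePath_isPath (a b : V) : (treePath G hG a b).IsPath :=
  (hG.existsUnique_path a b).choose_spec.1

theorem mem_edges_treePath_iff {a b : V} {e : Sym2 V} :
    e ∈ (treePath G hG a b).edges ↔ ¬(G.deleteEdges {e}).Reachable a b :=
  hG.isAcyclic.mem_edges_iff_not_reachable_deleteEdges (treePath_isPath hG a b)

theorem mem_edges_treePath_iff_of_mem_darts {a b : V} {d : G.Dart}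
    (hd : d ∈ (treePath G hG a b).darts) (x : V) :
    (d.edge ∈ (treePath G hG x a).edges ↔ ¬(G.deleteEdges {d.edge}).Reachable x d.fst) ∧
      (d.edge ∈ (treePath G hG x b).edges ↔ (G.deleteEdges {d.edge}).Reachable x d.fst) := by
  have hab := (treePath_isPath hG a b).isTrail
  have ha := hab.reachable_deleteEdges_fst_of_mem_darts hd
  have hb := hab.reachable_deleteEdges_snd_of_mem_darts hd
  rw [mem_edges_treePath_iff hG, mem_edges_treePath_iff hG]
  refine ⟨not_congr ⟨fun h => h.trans ha, fun h => h.trans ha.symm⟩,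
    fun h => ?_, fun h hxb => ?_⟩
  · exact (hG.connected.preconnected.reachable_deleteEdges_fst_or_snd d x).resolve_right
      fun hs => h (hs.trans hb)
  · exact hG.isAcyclic.not_reachable_deleteEdges_edge d (h.symm.trans (hxb.trans hb.symm))

end TreePath

section SqrtEmbed

variable {V : Type*} [DecidableEq V] {G : SimpleGraph V} (hG : G.IsTree) [Fintype G.edgeSet]
  (w : Sym2 V → ℝ) (v : V) {a b : V}

theorem sqrtEmbed_apply (u : V) (e : G.edgeSet) :
    sqrtEmbed G hG w v u e =
      if (e : Sym2 V) ∈ (treePath G hG v u).edges then Real.sqrt (w e) else 0 :=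
  rfl

theorem sqrtEmbed_sub_apply_of_notMem_edges {e : G.edgeSet}
    (he : (e : Sym2 V) ∉ (treePath G hG a b).edges) :
    (sqrtEmbed G hG w v b - sqrtEmbed G hG w v a) e = 0 := by
  have hab : (G.deleteEdges {(e : Sym2 V)}).Reachable a b :=
    not_not.1 (mt (mem_edges_treePath_iff hG).2 he)
  have hva : (e : Sym2 V) ∈ (treePath G hG v a).edges ↔
      (e : Sym2 V) ∈ (treePath G hG v b).edges := by
    simp only [mem_edges_treePath_iff hG]
    exact not_congr ⟨fun h => h.trans hab, fun h => h.trans hab.symm⟩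
  simp only [PiLp.sub_apply, sqrtEmbed_apply, hva, sub_self]

open Classical in
theorem sqrtEmbed_sub_apply_of_mem_darts {d : G.Dart} (hd : d ∈ (treePath G hG a b).darts)
    {e : G.edgeSet} (he : d.edge = e) :
    (sqrtEmbed G hG w v b - sqrtEmbed G hG w v a) e =
      if (G.deleteEdges {(e : Sym2 V)}).Reachable v d.fst then Real.sqrt (w e)
      else -Real.sqrt (w e) := by
  obtain ⟨ha, hb⟩ := mem_edges_treePath_iff_of_mem_darts hG hd v
  rw [he] at ha hb
  simp only [PiLp.sub_apply, sqrtEmbed_apply, ha, hb]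
  split_ifs <;> simp

end SqrtEmbed

open RealInnerProductSpace in
/-- if the common subpath of `P_{v₁,v₂}` and `P_{v₃,v₄}` is traversed in the
same direction by both (every shared edge is traversed as the same dart), the dot product
`(Ψ v₂ - Ψ v₁) ⬝ (Ψ v₄ - Ψ v₃)` is the total weight of the shared edges. -/
theorem sqrtEmbed_inner_same_dir {V : Type*} [DecidableEq V] (G : SimpleGraph V)
    (hG : G.IsTree) [Fintype G.edgeSet] (w : Sym2 V → ℝ) (hw : ∀ e ∈ G.edgeSet, 0 < w e)
    (v v₁ v₂ v₃ v₄ : V)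
    (hsame : ∀ d₁ ∈ (treePath G hG v₁ v₂).darts, ∀ d₂ ∈ (treePath G hG v₃ v₄).darts,
      d₁.edge = d₂.edge → d₁.toProd = d₂.toProd) :
    ⟪sqrtEmbed G hG w v v₂ - sqrtEmbed G hG w v v₁,
      sqrtEmbed G hG w v v₄ - sqrtEmbed G hG w v v₃⟫ =
    ∑ e : G.edgeSet, if (e : Sym2 V) ∈ (treePath G hG v₁ v₂).edges ∧
        (e : Sym2 V) ∈ (treePath G hG v₃ v₄).edges then w e else 0 := by
  rw [PiLp.inner_apply]
  refine Finset.sum_congr rfl fun e _ => ?_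
  by_cases h₁₂ : (e : Sym2 V) ∈ (treePath G hG v₁ v₂).edges
  · by_cases h₃₄ : (e : Sym2 V) ∈ (treePath G hG v₃ v₄).edges
    · obtain ⟨d₁, hd₁, he₁⟩ := List.mem_map.1 h₁₂
      obtain ⟨d₂, hd₂, he₂⟩ := List.mem_map.1 h₃₄
      have hfst : d₁.fst = d₂.fst :=
        congrArg Prod.fst (hsame d₁ hd₁ d₂ hd₂ (he₁.trans he₂.symm))
      rw [if_pos ⟨h₁₂, h₃₄⟩, sqrtEmbed_sub_apply_of_mem_darts hG w v hd₁ he₁,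
        sqrtEmbed_sub_apply_of_mem_darts hG w v hd₂ he₂, hfst]
      split_ifs <;> simp [Real.sq_sqrt (hw e e.2).le]
    · rw [sqrtEmbed_sub_apply_of_notMem_edges hG w v h₃₄, inner_zero_right,
        if_neg fun h => h₃₄ h.2]
  · rw [sqrtEmbed_sub_apply_of_notMem_edges hG w v h₁₂, inner_zero_left,
      if_neg fun h => h₁₂ h.1]
end

section
/- Let Ψ = Ψ_v be the square root embedding of a positively edge-weighted tree T. For nodes v_1, v_2, v_3, v_4 of T, if the oriented paths P_{v_1,v_2} (from v_1 to v_2) and P_{v_3,v_4} (from v_3 to v_4) share no edges, then (Ψ(v_2) - Ψ(v_1)) · (Ψ(v_4) - Ψ(v_3)) = 0. -/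
open SimpleGraph

/-!
Every walk from `a` to `b` in a tree passes through all edges of the path from `a` to `b`.
Hence an edge lying on exactly one of the paths from `v` to `v₁` and from `v` to `v₂` lies on
the path from `v₁` to `v₂`, so `Ψ(v₂) - Ψ(v₁)` is supported on the edges of that path.
Two such differences over edge-disjoint paths have disjoint supports and are orthogonal.
-/

namespace treePath

variable {V : Type*} [DecidableEq V] {G : SimpleGraph V} (hG : G.IsTree)

theorem edges_subset_edges {a b : V} (p : G.Walk a b) : (treePath G hG a b).edges ⊆ p.edges := by
  have hbypass : p.bypass = treePath G hG a b :=
    (hG.existsUnique_path a b).choose_spec.2 p.bypass p.bypass_isPath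
  exact hbypass ▸ p.edges_bypass_subset_edges

theorem mem_edges_comm {a b : V} {e : Sym2 V} :
    e ∈ (treePath G hG a b).edges ↔ e ∈ (treePath G hG b a).edges := by
  constructor <;> intro he
  · simpa using edges_subset_edges hG (treePath G hG b a).reverse he
  · simpa using edges_subset_edges hG (treePath G hG a b).reverse he

theorem mem_edges_or_mem_edges {u v w : V} {e : Sym2 V} (he : e ∈ (treePath G hG u w).edges) :
    e ∈ (treePath G hG u v).edges ∨ e ∈ (treePath G hG v w).edges := by
  simpa using edges_subset_edges hG ((treePath G hG u v).append (treePath G hG v w)) he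

theorem mem_edges_iff_of_not_mem {a b v : V} {e : Sym2 V} (he : e ∉ (treePath G hG a b).edges) :
    e ∈ (treePath G hG v a).edges ↔ e ∈ (treePath G hG v b).edges := by
  constructor <;> intro hv
  · exact (mem_edges_or_mem_edges hG hv (v := b)).resolve_right
      fun hba => he ((mem_edges_comm hG).2 hba)
  · exact (mem_edges_or_mem_edges hG hv (v := a)).resolve_right he

end treePath

theorem sqrtEmbed_sub_apply_eq_zero {V : Type*} [DecidableEq V] {G : SimpleGraph V}
    (hG : G.IsTree) [Fintype G.edgeSet] (w : Sym2 V → ℝ) (v : V) {a b : V} {e : G.edgeSet}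
    (he : (e : Sym2 V) ∉ (treePath G hG a b).edges) :
    (sqrtEmbed G hG w v b - sqrtEmbed G hG w v a) e = 0 := by
  simp [sqrtEmbed, treePath.mem_edges_iff_of_not_mem hG he]

open RealInnerProductSpace in
theorem sqrtEmbed_inner_disjoint_general {V : Type*} [DecidableEq V] (G : SimpleGraph V)
    (hG : G.IsTree) [Fintype G.edgeSet] (w : Sym2 V → ℝ)
    (v v₁ v₂ v₃ v₄ : V)
    (hdisj : ∀ e : Sym2 V, e ∈ (treePath G hG v₁ v₂).edges →
      e ∉ (treePath G hG v₃ v₄).edges) :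
    ⟪sqrtEmbed G hG w v v₂ - sqrtEmbed G hG w v v₁,
      sqrtEmbed G hG w v v₄ - sqrtEmbed G hG w v v₃⟫ = 0 := by
  rw [PiLp.inner_apply]
  refine Finset.sum_eq_zero fun e _ => ?_
  by_cases h₁₂ : (e : Sym2 V) ∈ (treePath G hG v₁ v₂).edges
  · simp [sqrtEmbed_sub_apply_eq_zero hG w v (hdisj e h₁₂)]
  · simp [sqrtEmbed_sub_apply_eq_zero hG w v h₁₂]

open RealInnerProductSpace in
/-- if the paths `P_{v₁,v₂}` and `P_{v₃,v₄}` share no edges, then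
`(Ψ v₂ - Ψ v₁) ⬝ (Ψ v₄ - Ψ v₃) = 0`. -/
theorem sqrtEmbed_inner_disjoint {V : Type*} [DecidableEq V] (G : SimpleGraph V)
    (hG : G.IsTree) [Fintype G.edgeSet] (w : Sym2 V → ℝ) (hw : ∀ e ∈ G.edgeSet, 0 < w e)
    (v v₁ v₂ v₃ v₄ : V)
    (hdisj : ∀ e : Sym2 V, e ∈ (treePath G hG v₁ v₂).edges →
      e ∉ (treePath G hG v₃ v₄).edges) :
    ⟪sqrtEmbed G hG w v v₂ - sqrtEmbed G hG w v v₁,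
      sqrtEmbed G hG w v v₄ - sqrtEmbed G hG w v v₃⟫ = 0 :=
  sqrtEmbed_inner_disjoint_general G hG w v v₁ v₂ v₃ v₄ hdisj
end

section
/- Let T be a positively edge-weighted tree with square root embedding Ψ. For any three distinct nodes v_1, v_2, w of T, the vectors Ψ(v_1) - Ψ(w) and Ψ(v_2) - Ψ(w) satisfy (Ψ(v_1) - Ψ(w)) · (Ψ(v_2) - Ψ(w)) ≥ 0; that is, the angle at any point of the image configuration is never obtuse. -/
open SimpleGraph

/-! Every coordinate of the square root embedding takes one of only two values, `0` and
`√(w e)`. Seen from a third point with the same property, the two differences in a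
coordinate are each either `0` or the same number `±√(w e)`, so their product is
nonnegative. -/

theorem sub_mul_sub_nonneg_of_mem_pair {x y a b c : ℝ} (ha : a ∈ ({x, y} : Set ℝ))
    (hb : b ∈ ({x, y} : Set ℝ)) (hc : c ∈ ({x, y} : Set ℝ)) : 0 ≤ (a - c) * (b - c) := by
  rcases ha with rfl | rfl <;> rcases hb with rfl | rfl <;> rcases hc with rfl | rfl <;>
    simp [mul_self_nonneg]

open RealInnerProductSpace in
theorem EuclideanSpace.inner_sub_sub_nonneg_of_mem_pair {ι : Type*} [Fintype ι]
    {x y : ι → ℝ} {p q r : EuclideanSpace ℝ ι} (hp : ∀ i, p i ∈ ({x i, y i} : Set ℝ))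
    (hq : ∀ i, q i ∈ ({x i, y i} : Set ℝ)) (hr : ∀ i, r i ∈ ({x i, y i} : Set ℝ)) :
    0 ≤ ⟪p - r, q - r⟫ := by
  rw [PiLp.inner_apply]
  refine Finset.sum_nonneg fun i _ => ?_
  rw [PiLp.sub_apply, PiLp.sub_apply, real_inner_eq_re_inner, RCLike.inner_apply,
    conj_trivial, RCLike.re_to_real, mul_comm]
  exact sub_mul_sub_nonneg_of_mem_pair (hp i) (hq i) (hr i)

theorem sqrtEmbed_apply_mem {V : Type*} [DecidableEq V] (G : SimpleGraph V) (hG : G.IsTree)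
    [Fintype G.edgeSet] (w : Sym2 V → ℝ) (v u : V) (e : G.edgeSet) :
    sqrtEmbed G hG w v u e ∈ ({0, Real.sqrt (w e)} : Set ℝ) := by
  rw [sqrtEmbed, WithLp.ofLp_toLp]
  split_ifs <;> simp

open RealInnerProductSpace in
theorem sqrtEmbed_angle_not_obtuse_general {V : Type*} [DecidableEq V] (G : SimpleGraph V)
    (hG : G.IsTree) [Fintype G.edgeSet] (w : Sym2 V → ℝ)
    (v v₁ v₂ u : V) :
    0 ≤ ⟪sqrtEmbed G hG w v v₁ - sqrtEmbed G hG w v u,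
          sqrtEmbed G hG w v v₂ - sqrtEmbed G hG w v u⟫ :=
  EuclideanSpace.inner_sub_sub_nonneg_of_mem_pair (sqrtEmbed_apply_mem G hG w v v₁)
    (sqrtEmbed_apply_mem G hG w v v₂) (sqrtEmbed_apply_mem G hG w v u)

open RealInnerProductSpace in
/-- no angle of the embedded configuration is obtuse: for distinct nodes
`v₁, v₂, u`, the vectors `Ψ v₁ - Ψ u` and `Ψ v₂ - Ψ u` have nonnegative dot product. -/
theorem sqrtEmbed_angle_not_obtuse {V : Type*} [DecidableEq V] (G : SimpleGraph V)
    (hG : G.IsTree) [Fintype G.edgeSet] (w : Sym2 V → ℝ) (hw : ∀ e ∈ G.edgeSet, 0 < w e)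
    (v v₁ v₂ u : V) (h₁ : v₁ ≠ u) (h₂ : v₂ ≠ u) (h₁₂ : v₁ ≠ v₂) :
    0 ≤ ⟪sqrtEmbed G hG w v v₁ - sqrtEmbed G hG w v u,
          sqrtEmbed G hG w v v₂ - sqrtEmbed G hG w v u⟫ :=
  sqrtEmbed_angle_not_obtuse_general G hG w v v₁ v₂ u
end
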